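/- arXiv:1607.00933 — 4 statements merged into one kernel-verified Lean document; each statement's English description precedes it below -/
import Mathlib

section
/- Let V be a finite-dimensional vector space over a field of characteristic zero, let N be nilpotent with N^k ≠ 0 and N^{k+1} = 0, and suppose W = (W_ℓ) is an increasing filtration satisfying the Jacobson–Morosov properties: N(W_ℓ) ⊆ W_{ℓ-2} and N^ℓ : W_ℓ/W_{ℓ-1} → W_{-ℓ}/W_{-ℓ-1} is an isomorphism for all ℓ ≥ 0. Then W_k = V = ker(N^{k+1}), W_{-k-1} = 0 = im(N^{k+1}), W_{k-1} = ker(N^k), and W_{-k} = im(N^k). -/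
/-- `W` is an increasing filtration of `V` satisfying the two Jacobson–Morosov
(weight filtration) properties for the nilpotent endomorphism `N`. -/
def IsWeightFiltration {K V : Type*} [Field K] [AddCommGroup V] [Module K V]
    (N : V →ₗ[K] V) (W : ℤ → Submodule K V) : Prop :=
  (∀ ℓ : ℤ, W (ℓ - 1) ≤ W ℓ) ∧
  (∃ m : ℤ, ∀ ℓ ≤ m, W ℓ = ⊥) ∧
  (∃ m : ℤ, ∀ ℓ ≥ m, W ℓ = ⊤) ∧
  (∀ ℓ : ℤ, (W ℓ).map N ≤ W (ℓ - 2)) ∧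
  (∀ ℓ : ℤ, 0 ≤ ℓ →
    (W (-ℓ) ≤ (W ℓ).map (N ^ ℓ.toNat) ⊔ W (-ℓ - 1)) ∧
    (∀ v ∈ W ℓ, (N ^ ℓ.toNat) v ∈ W (-ℓ - 1) → v ∈ W (ℓ - 1)))

/-- If `N^k ≠ 0 = N^{k+1}`, the top and bottom pieces of the Jacobson–Morosov
filtration of `N` are: `W_k = V = ker N^{k+1}`, `W_{-k-1} = 0 = im N^{k+1}`,
`W_{k-1} = ker N^k` and `W_{-k} = im N^k`. -/
theorem weight_filtration_extremes {K V : Type*} [Field K] [CharZero K]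
    [AddCommGroup V] [Module K V] [FiniteDimensional K V]
    (N : V →ₗ[K] V) (k : ℕ) (hk : N ^ k ≠ 0) (hk1 : N ^ (k + 1) = 0)
    (W : ℤ → Submodule K V) (hW : IsWeightFiltration N W) :
    W (k : ℤ) = ⊤ ∧ LinearMap.ker (N ^ (k + 1)) = ⊤ ∧
    W (-(k : ℤ) - 1) = ⊥ ∧ LinearMap.range (N ^ (k + 1)) = ⊥ ∧
    W ((k : ℤ) - 1) = LinearMap.ker (N ^ k) ∧
    W (-(k : ℤ)) = LinearMap.range (N ^ k) := by
  obtain ⟨h1, ⟨mb, hmb⟩, ⟨mt, hmt⟩, h4, h5⟩ := hW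
  -- N^m = 0 for m ≥ k+1
  have hzero : ∀ m : ℕ, k + 1 ≤ m → N ^ m = 0 := by
    intro m hm
    obtain ⟨j, rfl⟩ := Nat.exists_eq_add_of_le hm
    rw [pow_add, hk1, zero_mul]
  -- monotonicity
  have hmono : ∀ a b : ℤ, a ≤ b → W a ≤ W b := by
    intro a b hab
    obtain ⟨n, rfl⟩ : ∃ n : ℕ, b = a + n := ⟨(b - a).toNat, by omega⟩
    clear hab
    induction n with
    | zero => simp
    | succ n ih =>
      refine ih.trans ?_
      have h := h1 (a + n + 1)
      simp only [add_sub_cancel_right] at h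
      have : a + ((n : ℤ) + 1) = a + n + 1 := by ring
      push_cast
      rw [this]
      exact h
  -- iterates of property 4
  have hmap : ∀ j : ℕ, ∀ ℓ : ℤ, (W ℓ).map (N ^ j) ≤ W (ℓ - 2 * j) := by
    intro j
    induction j with
    | zero => intro ℓ; rw [pow_zero]; rintro _ ⟨w, hw, rfl⟩; simpa using hw
    | succ j ih =>
      intro ℓ
      rw [pow_succ]
      have hcomp : (W ℓ).map (N ^ j * N) = ((W ℓ).map N).map (N ^ j) := by
        rw [← Submodule.map_comp]; rfl
      rw [hcomp]
      have : ((W ℓ).map N).map (N ^ j) ≤ W (ℓ - 2 - 2 * j) :=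
        le_trans (Submodule.map_mono (h4 ℓ)) (ih (ℓ - 2))
      refine this.trans (le_of_eq ?_)
      congr 1
      push_cast
      ring
  -- W is constant at and above k
  have htop' : ∀ n : ℕ, W ((k : ℤ) + n) ≤ W (k : ℤ) := by
    intro n
    induction n with
    | zero => simp
    | succ n ih =>
      refine le_trans ?_ ih
      intro v hv
      have hl : (0 : ℤ) ≤ (k : ℤ) + n + 1 := by positivity
      have hv' : v ∈ W ((k : ℤ) + n + 1) := by
        have : (k : ℤ) + ((n : ℤ) + 1) = (k : ℤ) + n + 1 := by ring
        push_cast at hv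
        rwa [this] at hv
      have hz : N ^ ((k : ℤ) + n + 1).toNat = 0 := hzero _ (by omega)
      have := (h5 ((k : ℤ) + n + 1) hl).2 v hv' (by rw [hz]; simp)
      simpa using this
  have hWk : W (k : ℤ) = ⊤ := by
    rw [eq_top_iff]
    have h1' : W (max mt (k : ℤ)) = ⊤ := hmt _ (le_max_left _ _)
    have h2' : W (max mt (k : ℤ)) ≤ W (k : ℤ) := by
      have := htop' (max mt (k : ℤ) - (k : ℤ)).toNat
      have he : (k : ℤ) + ((max mt (k : ℤ) - (k : ℤ)).toNat : ℤ) = max mt (k : ℤ) := by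
        have := le_max_right mt (k : ℤ); omega
      rwa [he] at this
    rw [← h1']
    exact h2'
  -- W is constant at and below -k-1
  have hbot' : ∀ n : ℕ, W (-(k : ℤ) - 1) ≤ W (-(k : ℤ) - 1 - n) := by
    intro n
    induction n with
    | zero => simp
    | succ n ih =>
      refine ih.trans ?_
      have hl : (0 : ℤ) ≤ (k : ℤ) + 1 + n := by positivity
      have hz : N ^ ((k : ℤ) + 1 + n).toNat = 0 := hzero _ (by omega)
      have h := (h5 ((k : ℤ) + 1 + n) hl).1
      rw [hz] at h
      simp only [Submodule.map_zero, bot_sup_eq] at h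
      have he1 : -((k : ℤ) + 1 + n) = -(k : ℤ) - 1 - n := by ring
      rw [he1] at h
      refine h.trans (le_of_eq ?_)
      congr 1
      push_cast
      ring
  have hWbot : W (-(k : ℤ) - 1) = ⊥ := by
    rw [eq_bot_iff]
    have := hbot' (-(k : ℤ) - 1 - mb).toNat
    refine this.trans ?_
    rw [hmb _ (by omega)]
  refine ⟨hWk, ?_, hWbot, ?_, ?_, ?_⟩
  · rw [eq_top_iff]; intro v _; simp [LinearMap.mem_ker, hk1]
  · rw [LinearMap.range_eq_bot]; exact hk1
  · -- W (k-1) = ker N^k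
    apply le_antisymm
    · intro v hv
      have : (N ^ k) v ∈ W ((k : ℤ) - 1 - 2 * k) :=
        hmap k ((k : ℤ) - 1) ⟨v, hv, rfl⟩
      have he : (k : ℤ) - 1 - 2 * k = -(k : ℤ) - 1 := by ring
      rw [he, hWbot] at this
      simpa [LinearMap.mem_ker] using this
    · intro v hv
      have hv0 : (N ^ k) v = 0 := hv
      have := (h5 (k : ℤ) (by positivity)).2 v (by rw [hWk]; trivial)
        (by simp [Int.toNat_natCast, hv0])
      exact this
  · -- W (-k) = range N^k
    apply le_antisymm
    · have h := (h5 (k : ℤ) (by positivity)).1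
      rw [hWk, hWbot] at h
      simp only [Int.toNat_natCast, Submodule.map_top, sup_bot_eq] at h
      exact h
    · rw [LinearMap.range_eq_map, ← hWk]
      have := hmap k (k : ℤ)
      have he : (k : ℤ) - 2 * k = -(k : ℤ) := by ring
      rwa [he] at this
end

section
/- Let V be a finite-dimensional real vector space with a nondegenerate bilinear form Q satisfying Q(u,v) = (-1)^n Q(v,u), and let N ∈ End(V) satisfy Q(Nu,v) + Q(u,Nv) = 0 for all u,v (i.e. N lies in the Lie algebra of Aut(V,Q)). If N is nilpotent and W(N) denotes its Jacobson–Morosov filtration, then W(N) is Q-isotropic: Q(W_ℓ(N), W_{-ℓ-1}(N)) = 0 for all ℓ. -/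
/-- If `N` lies in the Lie algebra of `Aut(V,Q)` for a nondegenerate
(-1)^n-symmetric bilinear form `Q`, then the Jacobson–Morosov filtration of `N`
is `Q`-isotropic: `Q(W_ℓ, W_{-ℓ-1}) = 0` for all `ℓ`. -/
theorem weight_filtration_isotropic
    (V : Type*) [AddCommGroup V] [Module ℝ V] [FiniteDimensional ℝ V] (n : ℕ)
    (Q : V →ₗ[ℝ] V →ₗ[ℝ] ℝ)
    (hQnd : ∀ u : V, (∀ v : V, Q u v = 0) → u = 0)
    (hQsym : ∀ u v : V, Q u v = (-1 : ℝ) ^ n * Q v u)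
    (N : V →ₗ[ℝ] V) (hNQ : ∀ u v : V, Q (N u) v + Q u (N v) = 0)
    (hNnil : IsNilpotent N)
    (W : ℤ → Submodule ℝ V) (hW : IsWeightFiltration N W) :
    ∀ ℓ : ℤ, ∀ u ∈ W ℓ, ∀ v ∈ W (-ℓ - 1), Q u v = 0 := by
  obtain ⟨hmono1, ⟨m₁, hbot⟩, ⟨m₂, htop⟩, hmap, hprim⟩ := hW
  obtain ⟨k, hk⟩ := hNnil
  -- W is monotone
  have mono : ∀ a b : ℤ, a ≤ b → W a ≤ W b := by
    have key : ∀ t : ℕ, ∀ a : ℤ, W a ≤ W (a + t) := by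
      intro t
      induction t with
      | zero => intro a; simp
      | succ t ih =>
        intro a
        have h2 : W (a + (t : ℤ)) ≤ W (a + (t : ℤ) + 1) := by
          simpa using hmono1 (a + (t : ℤ) + 1)
        have harg : a + ((t + 1 : ℕ) : ℤ) = a + (t : ℤ) + 1 := by push_cast; ring
        rw [harg]
        exact (ih a).trans h2
    intro a b hab
    have hb : b = a + ((b - a).toNat : ℤ) := by
      rw [Int.toNat_of_nonneg (by omega)]; ring
    rw [hb]; exact key _ a
  -- N^p maps W ℓ into W (ℓ - 2p)
  have powmap : ∀ p : ℕ, ∀ ℓ : ℤ, ∀ v ∈ W ℓ, (N ^ p) v ∈ W (ℓ - 2 * p) := by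
    intro p
    induction p with
    | zero => intro ℓ v hv; simpa using hv
    | succ p ih =>
      intro ℓ v hv
      have h1 : N v ∈ W (ℓ - 2) := hmap ℓ ⟨v, hv, rfl⟩
      have h2 := ih (ℓ - 2) (N v) h1
      have h3 : (N ^ (p + 1)) v = (N ^ p) (N v) := by
        rw [pow_succ]; rfl
      rw [h3]
      have harg : ℓ - 2 * ((p + 1 : ℕ) : ℤ) = ℓ - 2 - 2 * (p : ℤ) := by push_cast; ring
      rw [harg]
      exact h2
  -- iterated skew-adjointness
  have skew : ∀ p : ℕ, ∀ u v : V, Q u ((N ^ p) v) = (-1 : ℝ) ^ p * Q ((N ^ p) u) v := by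
    intro p
    induction p with
    | zero => simp
    | succ p ih =>
      intro u v
      have h1 : (N ^ (p + 1)) v = (N ^ p) (N v) := by rw [pow_succ]; rfl
      have h2 : N ((N ^ p) u) = (N ^ (p + 1)) u := by rw [pow_succ']; rfl
      have h3 : Q ((N ^ p) u) (N v) = - Q (N ((N ^ p) u)) v := by
        have := hNQ ((N ^ p) u) v
        linarith
      rw [h1, ih u (N v), h3, h2]
      ring
  -- W vanishes at or below -k
  have hstep : ∀ j : ℤ, (k : ℤ) ≤ j → W (-j - 1) = W (-j) := by
    intro j hj
    refine le_antisymm (mono _ _ (by omega)) ?_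
    have h0 : (0 : ℤ) ≤ j := by omega
    have hsurj := (hprim j h0).1
    have hz : (N : V →ₗ[ℝ] V) ^ j.toNat = 0 := by
      have hk' : k ≤ j.toNat := by omega
      obtain ⟨d, hd⟩ := Nat.exists_eq_add_of_le hk'
      rw [hd, pow_add, hk, zero_mul]
    rw [hz] at hsurj
    simpa using hsurj
  have hdown : ∀ t : ℕ, W (-(k : ℤ) - (t : ℤ)) = W (-(k : ℤ)) := by
    intro t
    induction t with
    | zero => simp
    | succ t ih =>
      have h1 : -(k : ℤ) - ((t + 1 : ℕ) : ℤ) = -((k : ℤ) + (t : ℤ)) - 1 := by push_cast; ring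
      rw [h1, hstep ((k : ℤ) + t) (by omega)]
      have h2 : -((k : ℤ) + (t : ℤ)) = -(k : ℤ) - (t : ℤ) := by ring
      rw [h2, ih]
  have hbotk : ∀ ℓ : ℤ, ℓ ≤ -(k : ℤ) → W ℓ = ⊥ := by
    intro ℓ hℓ
    have hWk : W (-(k : ℤ)) = ⊥ := by
      set t := (-(k : ℤ) - m₁).toNat with ht
      have h1 := hdown t
      have h2 : W (-(k : ℤ) - (t : ℤ)) = ⊥ := by
        apply hbot
        have := Int.self_le_toNat (-(k : ℤ) - m₁)
        omega
      rw [← h1, h2]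
    have := mono ℓ (-(k : ℤ)) hℓ
    rw [hWk] at this
    exact le_bot_iff.mp this
  -- main downward induction for ℓ ≥ 0
  have main : ∀ d : ℕ, ∀ ℓ : ℤ, 0 ≤ ℓ → (k : ℤ) - 1 - ℓ ≤ (d : ℤ) →
      ∀ u ∈ W ℓ, ∀ v ∈ W (-ℓ - 1), Q u v = 0 := by
    intro d
    induction d with
    | zero =>
      intro ℓ h0 hle u hu v hv
      have hB : W (-ℓ - 1) = ⊥ := hbotk _ (by omega)
      rw [hB, Submodule.mem_bot] at hv
      simp [hv]
    | succ d ih =>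
      intro ℓ h0 hle u hu v hv
      have h01 : (0 : ℤ) ≤ ℓ + 1 := by omega
      have hsurj := (hprim (ℓ + 1) h01).1
      have hv' : v ∈ (W (ℓ + 1)).map (N ^ (ℓ + 1).toNat) ⊔ W (-(ℓ + 1) - 1) := by
        apply hsurj
        have harg : -(ℓ + 1) = -ℓ - 1 := by ring
        rw [harg]; exact hv
      rw [Submodule.mem_sup] at hv'
      obtain ⟨y, hy, z, hz, hyz⟩ := hv'
      obtain ⟨w, hw, hwy⟩ := hy
      set p := (ℓ + 1).toNat with hp
      have hpc : (p : ℤ) = ℓ + 1 := Int.toNat_of_nonneg h01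
      have hQz : Q u z = 0 :=
        ih (ℓ + 1) h01 (by omega) u (mono ℓ (ℓ + 1) (by omega) hu) z hz
      have hNu : (N ^ p) u ∈ W (-(ℓ + 1) - 1) := by
        have h4 := powmap p ℓ u hu
        have harg : ℓ - 2 * (p : ℤ) = -(ℓ + 1) - 1 := by rw [hpc]; ring
        rwa [harg] at h4
      have hQy : Q u y = 0 := by
        rw [← hwy, skew p u w, hQsym ((N ^ p) u) w,
          ih (ℓ + 1) h01 (by omega) w hw _ hNu]
        ring
      rw [← hyz, map_add, hQy, hQz]; ring
  intro ℓ u hu v hv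
  rcases le_or_gt 0 ℓ with h0 | h0
  · exact main ((k : ℤ) - 1 - ℓ).toNat ℓ h0 (Int.self_le_toNat _) u hu v hv
  · have h0' : (0 : ℤ) ≤ -ℓ - 1 := by omega
    have hu' : u ∈ W (-(-ℓ - 1) - 1) := by
      have harg : -(-ℓ - 1) - 1 = ℓ := by ring
      rw [harg]; exact hu
    have hmain := main ((k : ℤ) - 1 - (-ℓ - 1)).toNat (-ℓ - 1) h0'
      (Int.self_le_toNat _) v hv u hu'
    rw [hQsym u v, hmain, mul_zero]
end

section
/- Fix a, b ≥ 0 and n = 2, with Hodge numbers h^{2,0} = h^{0,2} = b and h^{1,1} = a. The functions ◇ : ℤ × ℤ → ℤ≥0 satisfying (a) Σ_p ◇(p,q) = h^{2-q,q} for all q (with h^{2-q,q} = 0 for q ∉ {0,1,2}), (b) ◇(p,q) = ◇(q,p), (c) ◇(p,q) = ◇(2-q,2-p), and (d) ◇(p,q) ≥ ◇(p+1,q+1) for p+q ≥ 2, are in bijection with pairs of nonnegative integers (r,s) with r + s ≤ b and r + 2s ≤ a, via ◇_{r,s}(0,0) = ◇_{r,s}(2,2) = r, ◇_{r,s}(0,1)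 = ◇_{r,s}(1,0) = ◇_{r,s}(1,2) = ◇_{r,s}(2,1) = s, ◇_{r,s}(0,2) = ◇_{r,s}(2,0) = b - r - s, ◇_{r,s}(1,1) = a - 2s, and ◇_{r,s} = 0 elsewhere. -/
/-- Auxiliary: the diamond `◇_{r,s}` from the theorem statement, as a top-level def. -/
def HDF (a b r s : ℕ) : ℤ → ℤ → ℕ := fun p q =>
  if (p, q) = ((0 : ℤ), (0 : ℤ)) ∨ (p, q) = ((2 : ℤ), (2 : ℤ)) then r
  else if (p, q) = ((0 : ℤ), (1 : ℤ)) ∨ (p, q) = ((1 : ℤ), (0 : ℤ)) ∨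
          (p, q) = ((1 : ℤ), (2 : ℤ)) ∨ (p, q) = ((2 : ℤ), (1 : ℤ)) then s
  else if (p, q) = ((0 : ℤ), (2 : ℤ)) ∨ (p, q) = ((2 : ℤ), (0 : ℤ)) then b - r - s
  else if (p, q) = ((1 : ℤ), (1 : ℤ)) then a - 2 * s
  else 0

lemma HDF_00 (a b r s : ℕ) : HDF a b r s 0 0 = r := by
  simp only [HDF, Prod.mk.injEq]; norm_num
lemma HDF_01 (a b r s : ℕ) : HDF a b r s 0 1 = s := by
  simp only [HDF, Prod.mk.injEq]; norm_num
lemma HDF_10 (a b r s : ℕ) : HDF a b r s 1 0 = s := by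
  simp only [HDF, Prod.mk.injEq]; norm_num
lemma HDF_02 (a b r s : ℕ) : HDF a b r s 0 2 = b - r - s := by
  simp only [HDF, Prod.mk.injEq]; norm_num
lemma HDF_20 (a b r s : ℕ) : HDF a b r s 2 0 = b - r - s := by
  simp only [HDF, Prod.mk.injEq]; norm_num
lemma HDF_11 (a b r s : ℕ) : HDF a b r s 1 1 = a - 2 * s := by
  simp only [HDF, Prod.mk.injEq]; norm_num
lemma HDF_12 (a b r s : ℕ) : HDF a b r s 1 2 = s := by
  simp only [HDF, Prod.mk.injEq]; norm_num
lemma HDF_21 (a b r s : ℕ) : HDF a b r s 2 1 = s := by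
  simp only [HDF, Prod.mk.injEq]; norm_num
lemma HDF_22 (a b r s : ℕ) : HDF a b r s 2 2 = r := by
  simp only [HDF, Prod.mk.injEq]; norm_num

lemma HDF_zero_of_outside (a b r s : ℕ) (p q : ℤ)
    (h : ¬(p = 0 ∨ p = 1 ∨ p = 2) ∨ ¬(q = 0 ∨ q = 1 ∨ q = 2)) : HDF a b r s p q = 0 := by
  simp only [HDF, Prod.mk.injEq]
  rw [if_neg (by omega), if_neg (by omega), if_neg (by omega), if_neg (by omega)]

lemma HDF_support_subset (a b r s : ℕ) :
    Function.support (Function.uncurry (HDF a b r s)) ⊆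
      (({0, 1, 2} : Finset ℤ) ×ˢ ({0, 1, 2} : Finset ℤ) : Finset (ℤ × ℤ)) := by
  rintro ⟨p, q⟩ h
  simp only [Function.mem_support, Function.uncurry] at h
  by_contra hmem
  apply h
  apply HDF_zero_of_outside
  simp only [Finset.coe_product, Finset.mem_coe, Set.mem_prod, Finset.mem_insert,
    Finset.mem_singleton] at hmem
  tauto

lemma HDF_col_support (a b r s : ℕ) (q : ℤ) :
    Function.support (fun p => HDF a b r s p q) ⊆ (({0, 1, 2} : Finset ℤ) : Set ℤ) := by
  intro p hp
  simp only [Function.mem_support] at hp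
  by_contra hmem
  apply hp
  apply HDF_zero_of_outside
  left
  simpa using hmem

lemma HDF_colsum (a b r s : ℕ) (q : ℤ) :
    ∑ᶠ p : ℤ, HDF a b r s p q = HDF a b r s 0 q + HDF a b r s 1 q + HDF a b r s 2 q := by
  rw [finsum_eq_sum_of_support_subset _ (HDF_col_support a b r s q)]
  rw [show ({0, 1, 2} : Finset ℤ) = {0} ∪ {1} ∪ {2} by rfl]
  rw [Finset.sum_union (by decide), Finset.sum_union (by decide)]
  simp

lemma HDF_symm (a b r s : ℕ) (p q : ℤ) : HDF a b r s p q = HDF a b r s q p := by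
  by_cases hp : p = 0 ∨ p = 1 ∨ p = 2
  · by_cases hq : q = 0 ∨ q = 1 ∨ q = 2
    · rcases hp with rfl | rfl | rfl <;> rcases hq with rfl | rfl | rfl <;>
        simp only [HDF_00, HDF_01, HDF_10, HDF_02, HDF_20, HDF_11, HDF_12, HDF_21, HDF_22]
    · rw [HDF_zero_of_outside a b r s p q (Or.inr hq),
        HDF_zero_of_outside a b r s q p (Or.inl hq)]
  · rw [HDF_zero_of_outside a b r s p q (Or.inl hp),
      HDF_zero_of_outside a b r s q p (Or.inr hp)]

lemma HDF_dual (a b r s : ℕ) (p q : ℤ) :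
    HDF a b r s p q = HDF a b r s (2 - q) (2 - p) := by
  by_cases hp : p = 0 ∨ p = 1 ∨ p = 2
  · by_cases hq : q = 0 ∨ q = 1 ∨ q = 2
    · rcases hp with rfl | rfl | rfl <;> rcases hq with rfl | rfl | rfl <;> norm_num <;>
        simp only [HDF_00, HDF_01, HDF_10, HDF_02, HDF_20, HDF_11, HDF_12, HDF_21, HDF_22]
    · rw [HDF_zero_of_outside a b r s p q (Or.inr hq),
        HDF_zero_of_outside a b r s (2 - q) (2 - p) (Or.inl (by omega))]
  · rw [HDF_zero_of_outside a b r s p q (Or.inl hp),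
      HDF_zero_of_outside a b r s (2 - q) (2 - p) (Or.inr (by omega))]

lemma HDF_mono (a b r s : ℕ) (hra : r + 2 * s ≤ a) (p q : ℤ) (hpq : (2 : ℤ) ≤ p + q) :
    HDF a b r s (p + 1) (q + 1) ≤ HDF a b r s p q := by
  by_cases h : p = 1 ∧ q = 1
  · obtain ⟨rfl, rfl⟩ := h
    norm_num [HDF_22, HDF_11]
    omega
  · rw [HDF_zero_of_outside a b r s (p + 1) (q + 1) (by omega)]
    exact Nat.zero_le _

lemma HDF_sum (a b r s : ℕ) (hrb : r + s ≤ b) (hra : r + 2 * s ≤ a) (q : ℤ) :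
    ∑ᶠ p : ℤ, HDF a b r s p q =
      if q = 0 ∨ q = 2 then b else if q = 1 then a else 0 := by
  by_cases hq : q = 0 ∨ q = 1 ∨ q = 2
  · rcases hq with rfl | rfl | rfl
    · rw [HDF_colsum, HDF_00, HDF_10, HDF_20, if_pos (Or.inl rfl)]
      omega
    · rw [HDF_colsum, HDF_01, HDF_11, HDF_21, if_neg (by omega), if_pos rfl]
      omega
    · rw [HDF_colsum, HDF_02, HDF_12, HDF_22, if_pos (Or.inr rfl)]
      omega
  · rw [if_neg (by omega), if_neg (by omega)]
    apply finsum_eq_zero_of_forall_eq_zero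
    intro p
    exact HDF_zero_of_outside a b r s p q (Or.inr hq)

/-- Classification of Hodge diamonds for weight `n = 2` and Hodge numbers `(b,a,b)`:
they are in bijection with pairs `(r,s)` of nonnegative integers with `r + s ≤ b`
and `r + 2s ≤ a`, via the diamonds `◇_{r,s}` described in Example `\ref{eg:bab}`. -/
theorem hodge_diamonds_bab (a b : ℕ) :
    let Drs : ℕ → ℕ → ℤ → ℤ → ℕ := fun r s p q =>
      if (p, q) = ((0 : ℤ), (0 : ℤ)) ∨ (p, q) = ((2 : ℤ), (2 : ℤ)) then r
      else if (p, q) = ((0 : ℤ), (1 : ℤ)) ∨ (p, q) = ((1 : ℤ), (0 : ℤ)) ∨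
              (p, q) = ((1 : ℤ), (2 : ℤ)) ∨ (p, q) = ((2 : ℤ), (1 : ℤ)) then s
      else if (p, q) = ((0 : ℤ), (2 : ℤ)) ∨ (p, q) = ((2 : ℤ), (0 : ℤ)) then b - r - s
      else if (p, q) = ((1 : ℤ), (1 : ℤ)) then a - 2 * s
      else 0
    (∀ D : ℤ → ℤ → ℕ,
      ((Function.support (Function.uncurry D)).Finite ∧
       (∀ q : ℤ, (∑ᶠ p : ℤ, D p q) =
          if q = 0 ∨ q = 2 then b else if q = 1 then a else 0) ∧
       (∀ p q : ℤ, D p q = D q p) ∧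
       (∀ p q : ℤ, D p q = D (2 - q) (2 - p)) ∧
       (∀ p q : ℤ, (2 : ℤ) ≤ p + q → D (p + 1) (q + 1) ≤ D p q))
      ↔ ∃ r s : ℕ, r + s ≤ b ∧ r + 2 * s ≤ a ∧ D = Drs r s) ∧
    (∀ r s t u : ℕ, r + s ≤ b → r + 2 * s ≤ a → t + u ≤ b → t + 2 * u ≤ a →
      Drs r s = Drs t u → r = t ∧ s = u) := by
  intro Drs
  have hDrs : Drs = HDF a b := rfl
  constructor
  · intro D
    constructor
    · rintro ⟨hfin, hsum, hsym, hdual, hmono⟩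
      -- column finiteness
      have colfin : ∀ q : ℤ, (Function.support fun p => D p q).Finite := by
        intro q
        have hE : (Function.support fun p => D p q) =
            (fun p => (p, q)) ⁻¹' Function.support (Function.uncurry D) := rfl
        rw [hE]
        exact Set.Finite.preimage
          (Set.injOn_of_injective (fun x y h => congrArg Prod.fst h)) hfin
      -- vanishing off the grid
      have Dvan : ∀ p q : ℤ, ¬(q = 0 ∨ q = 1 ∨ q = 2) → D p q = 0 := by
        intro p q hq
        have h0 : (∑ᶠ p : ℤ, D p q) = 0 := by
          rw [hsum q, if_neg (by omega), if_neg (by omega)]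
        have := single_le_finsum p (colfin q) (fun j => Nat.zero_le _)
        omega
      have Dvan' : ∀ p q : ℤ, ¬(p = 0 ∨ p = 1 ∨ p = 2) → D p q = 0 := by
        intro p q hp
        rw [hsym]; exact Dvan q p hp
      -- column sums over the grid
      have colsub : ∀ q : ℤ, Function.support (fun p => D p q) ⊆
          (({0, 1, 2} : Finset ℤ) : Set ℤ) := by
        intro q p hp
        simp only [Function.mem_support] at hp
        by_contra hmem
        exact hp (Dvan' p q (by simpa using hmem))
      have colsum : ∀ q : ℤ, ∑ᶠ p : ℤ, D p q = D 0 q + D 1 q + D 2 q := by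
        intro q
        rw [finsum_eq_sum_of_support_subset _ (colsub q)]
        rw [show ({0, 1, 2} : Finset ℤ) = {0} ∪ {1} ∪ {2} by rfl]
        rw [Finset.sum_union (by decide), Finset.sum_union (by decide)]
        simp
      have E0 : D 0 0 + D 1 0 + D 2 0 = b := by
        have := hsum 0; rw [colsum 0] at this; simpa using this
      have E1 : D 0 1 + D 1 1 + D 2 1 = a := by
        have := hsum 1; rw [colsum 1] at this; simpa using this
      -- symmetry values
      have v10 : D 1 0 = D 0 1 := hsym 1 0
      have v20 : D 2 0 = D 0 2 := hsym 2 0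
      have v21 : D 2 1 = D 0 1 := by
        rw [hsym 2 1]; have := hdual 1 2; simpa using this
      have v12 : D 1 2 = D 0 1 := by have := hdual 1 2; simpa using this
      have v22 : D 2 2 = D 0 0 := by have := hdual 2 2; simpa using this
      have vmono : D 2 2 ≤ D 1 1 := by have := hmono 1 1 (by norm_num); simpa using this
      refine ⟨D 0 0, D 0 1, by omega, by omega, ?_⟩
      rw [hDrs]
      funext p q
      by_cases hp : p = 0 ∨ p = 1 ∨ p = 2
      · by_cases hq : q = 0 ∨ q = 1 ∨ q = 2
        · rcases hp with rfl | rfl | rfl <;> rcases hq with rfl | rfl | rfl <;>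
            simp only [HDF_00, HDF_01, HDF_10, HDF_02, HDF_20, HDF_11, HDF_12,
              HDF_21, HDF_22] <;> omega
        · rw [Dvan p q hq, HDF_zero_of_outside a b _ _ p q (Or.inr hq)]
      · rw [Dvan' p q hp, HDF_zero_of_outside a b _ _ p q (Or.inl hp)]
    · rintro ⟨r, s, hrb, hra, rfl⟩
      rw [hDrs]
      exact ⟨Set.Finite.subset (Finset.finite_toSet _) (HDF_support_subset a b r s),
        HDF_sum a b r s hrb hra, HDF_symm a b r s, HDF_dual a b r s,
        HDF_mono a b r s hra⟩
  · intro r s t u _ _ _ _ h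
    rw [hDrs] at h
    have h00 := congrFun (congrFun h 0) 0
    have h01 := congrFun (congrFun h 0) 1
    rw [HDF_00, HDF_00] at h00
    rw [HDF_01, HDF_01] at h01
    exact ⟨h00, h01⟩
end

section
/- Fix a ≥ 2 and n = 2, with Hodge numbers h^{2,0} = h^{0,2} = 1 and h^{1,1} = a. There are exactly three functions ◇ : ℤ × ℤ → ℤ≥0 satisfying the four Hodge-diamond axioms (column sums equal to Hodge numbers, symmetry about p = q, symmetry about p + q = 2, and monotone non-increase along diagonals away from p + q = 2), namely: (I) ◇(0,2)=◇(2,0)=1, ◇(1,1)=a; (II) ◇(0,1)=◇(1,0)=◇(1,2)=◇(2,1)=1, ◇(1,1)=a-2; (III) ◇(0,0)=◇(2,2)=1, ◇(1,1)=a; each zero elsewhere. -/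
private lemma finsum_col (f : ℤ → ℕ) (h : ∀ p, p ≠ 0 → p ≠ 1 → p ≠ 2 → f p = 0) :
    ∑ᶠ p, f p = f 0 + f 1 + f 2 := by
  have hs : Function.support f ⊆ (({0,1,2} : Finset ℤ) : Set ℤ) := by
    intro p hp
    simp only [Finset.coe_insert, Finset.coe_singleton, Set.mem_insert_iff, Set.mem_singleton_iff]
    by_contra hc
    push_neg at hc
    exact hp (h p hc.1 hc.2.1 hc.2.2)
  rw [finsum_eq_sum_of_support_subset f hs]
  norm_num [Finset.sum_insert, Finset.mem_insert]
  omega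

set_option maxHeartbeats 1000000 in
/-- For weight `n = 2` and Hodge numbers `(1,a,1)` with `a ≥ 2`, there are exactly
three Hodge diamonds: the three diamonds of Example `\ref{eg:1a1}`. -/
theorem hodge_diamonds_1a1 (a : ℕ) (ha : 2 ≤ a) :
    let D1 : ℤ → ℤ → ℕ := fun p q =>
      if (p, q) = ((0 : ℤ), (2 : ℤ)) ∨ (p, q) = ((2 : ℤ), (0 : ℤ)) then 1
      else if (p, q) = ((1 : ℤ), (1 : ℤ)) then a else 0
    let D2 : ℤ → ℤ → ℕ := fun p q =>
      if (p, q) = ((0 : ℤ), (1 : ℤ)) ∨ (p, q) = ((1 : ℤ), (0 : ℤ)) ∨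
         (p, q) = ((1 : ℤ), (2 : ℤ)) ∨ (p, q) = ((2 : ℤ), (1 : ℤ)) then 1
      else if (p, q) = ((1 : ℤ), (1 : ℤ)) then a - 2 else 0
    let D3 : ℤ → ℤ → ℕ := fun p q =>
      if (p, q) = ((0 : ℤ), (0 : ℤ)) ∨ (p, q) = ((2 : ℤ), (2 : ℤ)) then 1
      else if (p, q) = ((1 : ℤ), (1 : ℤ)) then a else 0
    (∀ D : ℤ → ℤ → ℕ,
      ((Function.support (Function.uncurry D)).Finite ∧
       (∀ q : ℤ, (∑ᶠ p : ℤ, D p q) =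
          if q = 0 ∨ q = 2 then 1 else if q = 1 then a else 0) ∧
       (∀ p q : ℤ, D p q = D q p) ∧
       (∀ p q : ℤ, D p q = D (2 - q) (2 - p)) ∧
       (∀ p q : ℤ, (2 : ℤ) ≤ p + q → D (p + 1) (q + 1) ≤ D p q))
      ↔ (D = D1 ∨ D = D2 ∨ D = D3)) ∧
    D1 ≠ D2 ∧ D1 ≠ D3 ∧ D2 ≠ D3 := by
  intro D1 D2 D3
  refine ⟨fun D => ⟨?_, ?_⟩, ?_, ?_, ?_⟩
  · -- forward
    rintro ⟨hfin, hcol, hsym, hc, hmono⟩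
    have hcolfin : ∀ q : ℤ, (Function.support fun p => D p q).Finite := by
      intro q
      apply (hfin.image Prod.fst).subset
      intro p hp
      exact ⟨(p, q), hp, rfl⟩
    have hz : ∀ q, q ≠ 0 → q ≠ 1 → q ≠ 2 → ∀ p, D p q = 0 := by
      intro q h0 h1 h2 p
      have h := single_le_finsum p (hcolfin q) (fun j => Nat.zero_le _)
      rw [hcol q, if_neg (by tauto), if_neg h1] at h
      omega
    have hoff : ∀ p q, p ≠ 0 → p ≠ 1 → p ≠ 2 → D p q = 0 := fun p q h0 h1 h2 =>
      (hsym p q).trans (hz p h0 h1 h2 q)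
    have hcols : ∀ q, D 0 q + D 1 q + D 2 q =
        (if q = 0 ∨ q = 2 then 1 else if q = 1 then a else 0) := by
      intro q
      rw [← hcol q, finsum_col _ (fun p h0 h1 h2 => hoff p q h0 h1 h2)]
    have e0 := hcols 0
    have e1 := hcols 1
    have e2 := hcols 2
    norm_num at e0 e1 e2
    have s1 : D 1 0 = D 0 1 := hsym 1 0
    have s2 : D 2 0 = D 0 2 := hsym 2 0
    have s3 : D 2 1 = D 1 2 := hsym 2 1
    have c1 : D 0 0 = D 2 2 := by simpa using hc 0 0
    have c2 : D 0 1 = D 1 2 := by simpa using hc 0 1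
    have mono : D 2 2 ≤ D 1 1 := by simpa using hmono 1 1 (by norm_num)
    have key : (D 0 0 = 1 ∧ D 0 1 = 0 ∧ D 0 2 = 0) ∨
        (D 0 0 = 0 ∧ D 0 1 = 1 ∧ D 0 2 = 0) ∨
        (D 0 0 = 0 ∧ D 0 1 = 0 ∧ D 0 2 = 1) := by omega
    rcases key with ⟨hu, hv, hw⟩ | ⟨hu, hv, hw⟩ | ⟨hu, hv, hw⟩
    · right; right
      funext p q
      simp only [D3]
      by_cases hp : p = 0 ∨ p = 1 ∨ p = 2
      · by_cases hq : q = 0 ∨ q = 1 ∨ q = 2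
        · rcases hp with rfl | rfl | rfl <;> rcases hq with rfl | rfl | rfl <;>
            norm_num [Prod.ext_iff] <;> omega
        · push_neg at hq
          rw [hz q hq.1 hq.2.1 hq.2.2 p]
          simp only [Prod.mk.injEq]
          split_ifs <;> omega
      · push_neg at hp
        rw [hoff p q hp.1 hp.2.1 hp.2.2]
        simp only [Prod.mk.injEq]
        split_ifs <;> omega
    · right; left
      funext p q
      simp only [D2]
      by_cases hp : p = 0 ∨ p = 1 ∨ p = 2
      · by_cases hq : q = 0 ∨ q = 1 ∨ q = 2
        · rcases hp with rfl | rfl | rfl <;> rcases hq with rfl | rfl | rfl <;>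
            norm_num [Prod.ext_iff] <;> omega
        · push_neg at hq
          rw [hz q hq.1 hq.2.1 hq.2.2 p]
          simp only [Prod.mk.injEq]
          split_ifs <;> omega
      · push_neg at hp
        rw [hoff p q hp.1 hp.2.1 hp.2.2]
        simp only [Prod.mk.injEq]
        split_ifs <;> omega
    · left
      funext p q
      simp only [D1]
      by_cases hp : p = 0 ∨ p = 1 ∨ p = 2
      · by_cases hq : q = 0 ∨ q = 1 ∨ q = 2
        · rcases hp with rfl | rfl | rfl <;> rcases hq with rfl | rfl | rfl <;>
            norm_num [Prod.ext_iff] <;> omega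
        · push_neg at hq
          rw [hz q hq.1 hq.2.1 hq.2.2 p]
          simp only [Prod.mk.injEq]
          split_ifs <;> omega
      · push_neg at hp
        rw [hoff p q hp.1 hp.2.1 hp.2.2]
        simp only [Prod.mk.injEq]
        split_ifs <;> omega
  · -- backward
    rintro (rfl | rfl | rfl) <;>
    · refine ⟨Set.Finite.subset ((Set.finite_Icc (0:ℤ) 2).prod (Set.finite_Icc (0:ℤ) 2)) ?_,
        ?_, ?_, ?_, ?_⟩
      · intro x hx
        obtain ⟨p, q⟩ := x
        simp only [Function.mem_support, Function.uncurry, D1, D2, D3] at hx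
        simp only [Set.mem_prod, Set.mem_Icc]
        try norm_num [Prod.mk.injEq] at hx
        split_ifs at hx <;> omega
      · intro q
        rw [finsum_col]
        · simp only [D1, D2, D3]
          try norm_num [Prod.mk.injEq]
          split_ifs <;> omega
        · intro p h0 h1 h2
          simp only [D1, D2, D3]
          try norm_num [Prod.mk.injEq]
          split_ifs <;> omega
      · intro p q
        simp only [D1, D2, D3]
        try norm_num [Prod.mk.injEq]
        split_ifs <;> omega
      · intro p q
        simp only [D1, D2, D3]
        try norm_num [Prod.mk.injEq]
        split_ifs <;> omega
      · intro p q h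
        simp only [D1, D2, D3]
        try norm_num [Prod.mk.injEq]
        split_ifs <;> omega
  · intro h
    have h2 := congrFun (congrFun h 0) 2
    simp only [D1, D2, Prod.mk.injEq] at h2
    norm_num at h2
  · intro h
    have h2 := congrFun (congrFun h 0) 2
    simp only [D1, D3, Prod.mk.injEq] at h2
    norm_num at h2
  · intro h
    have h2 := congrFun (congrFun h 0) 1
    simp only [D2, D3, Prod.mk.injEq] at h2
    norm_num at h2
end
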